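/- arXiv:1503.05662 — 2 statements merged into one kernel-verified Lean document; each statement's English description precedes it below -/
import Mathlib

section
/- If ψ ∈ H_L satisfies U_trl ψ = e^{iq} ψ and S^z_T ψ = M ψ, then U_trl (U^tw_{±2π} ψ) = exp(i(q ∓ 2πM/L + 2πS)) · (U^tw_{±2π} ψ) and S^z_T (U^tw_{±2π} ψ) = M (U^tw_{±2π} ψ); i.e., twisting shifts the wavenumber by ∓2πM/L + 2πS while preserving the magnetization. -/
open scoped BigOperators Matrix
open Fin.NatCast
noncomputable section

namespace LSM

/-- Number of basis states per site: `2S+1`. -/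
abbrev N (twoS : ℕ) : ℕ := twoS + 1

/-- The spin value `S` as a real number (so `2S = twoS`). -/
def spin (twoS : ℕ) : ℝ := (twoS : ℝ) / 2

/-- The `S^z`-value of the `k`-th basis vector: `m = S - k`, `k = 0, …, 2S`. -/
def mval (twoS : ℕ) (k : Fin (N twoS)) : ℝ := spin twoS - (k : ℕ)

/-- Single-site `S^z` matrix. -/
def SzMat (twoS : ℕ) : Matrix (Fin (N twoS)) (Fin (N twoS)) ℂ :=
  Matrix.diagonal fun k => (mval twoS k : ℂ)

/-- Single-site raising operator `S^+`. -/
def SpMat (twoS : ℕ) : Matrix (Fin (N twoS)) (Fin (N twoS)) ℂ :=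
  Matrix.of fun a b =>
    if (a : ℕ) + 1 = (b : ℕ) then
      ((Real.sqrt (spin twoS * (spin twoS + 1) - mval twoS b * (mval twoS b + 1)) : ℝ) : ℂ)
    else 0

/-- Single-site lowering operator `S^-`. -/
def SmMat (twoS : ℕ) : Matrix (Fin (N twoS)) (Fin (N twoS)) ℂ :=
  Matrix.of fun a b =>
    if (a : ℕ) = (b : ℕ) + 1 then
      ((Real.sqrt (spin twoS * (spin twoS + 1) - mval twoS b * (mval twoS b - 1)) : ℝ) : ℂ)
    else 0

/-- Single-site `S^y = (S^+ - S^-)/(2i)`. -/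
def SyMat (twoS : ℕ) : Matrix (Fin (N twoS)) (Fin (N twoS)) ℂ :=
  ((2 : ℂ) * Complex.I)⁻¹ • (SpMat twoS - SmMat twoS)

/-- Single-site `S^x = (S^+ + S^-)/2`. -/
def SxMat (twoS : ℕ) : Matrix (Fin (N twoS)) (Fin (N twoS)) ℂ :=
  ((2 : ℂ))⁻¹ • (SpMat twoS + SmMat twoS)

/-- Configurations (product basis labels) of the chain of length `L`. -/
abbrev Conf (twoS L : ℕ) := Fin L → Fin (N twoS)

/-- Operators on the chain Hilbert space `⊗_{j=1}^L ℂ^{2S+1}`, as matrices in the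
product basis. -/
abbrev Op (twoS L : ℕ) := Matrix (Conf twoS L) (Conf twoS L) ℂ

/-- The single-site matrix `A` acting on the `j`-th tensor factor (identity elsewhere). -/
def site (twoS L : ℕ) (j : Fin L) (A : Matrix (Fin (N twoS)) (Fin (N twoS)) ℂ) :
    Op twoS L :=
  Matrix.of fun x y => if ∀ i, i ≠ j → x i = y i then A (x j) (y j) else 0

/-- Total `S^z`. -/
def SzT (twoS L : ℕ) : Op twoS L := ∑ j : Fin L, site twoS L j (SzMat twoS)

/-- Total `S^y`. -/
def SyT (twoS L : ℕ) : Op twoS L := ∑ j : Fin L, site twoS L j (SyMat twoS)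

/-- Translation by one site: the permutation matrix with
`Utrl† A_j Utrl = A_{j+1}` for every single-site operator `A`. -/
def Utrl (twoS L : ℕ) [NeZero L] : Op twoS L :=
  Matrix.of fun x y => if x = (fun i => y (i + 1)) then 1 else 0

/-- Site parity (space inversion `j ↦ L - j = -j (mod L)`): the permutation matrix with
`P† A_j P = A_{L-j}` for every single-site operator `A`. -/
def Pop (twoS L : ℕ) [NeZero L] : Op twoS L :=
  Matrix.of fun x y => if x = (fun i => y (-i)) then 1 else 0

/-- Link parity `P_link = P U_trl`. -/
def Plink (twoS L : ℕ) [NeZero L] : Op twoS L := Pop twoS L * Utrl twoS L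

/-- The generalized XXZ Hamiltonian with periodic boundary conditions. -/
def Ham (twoS L : ℕ) [NeZero L] (J Δ : ℕ → ℝ) (h : ℝ) : Op twoS L :=
  (∑ j : Fin L, ∑ r ∈ Finset.Icc 1 (L / 2),
      ((((J r : ℝ) : ℂ) / 2) •
        (site twoS L j (SpMat twoS) * site twoS L (j + (r : Fin L)) (SmMat twoS) +
          site twoS L j (SmMat twoS) * site twoS L (j + (r : Fin L)) (SpMat twoS)) +
      ((Δ r : ℝ) : ℂ) •
        (site twoS L j (SzMat twoS) * site twoS L (j + (r : Fin L)) (SzMat twoS)))) +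
    (h : ℂ) • SzT twoS L

/-- The generator `Σ_{j=1}^{L} j (S^z_j - S)` of the (site-centered) twist. -/
def twistGen (twoS L : ℕ) [NeZero L] : Op twoS L :=
  ∑ j ∈ Finset.Icc 1 L,
    (j : ℂ) • site twoS L ((j : ℕ) : Fin L) (SzMat twoS - ((spin twoS : ℝ) : ℂ) • 1)

/-- The twist operator `U^tw_{ε·2π} = exp(-ε (2πi/L) Σ_j j (S^z_j - S))`, `ε = ±1`. -/
def Utw (twoS L : ℕ) [NeZero L] (ε : ℝ) : Op twoS L :=
  NormedSpace.exp ((-(ε : ℂ) * ((2 * Real.pi / L : ℝ) : ℂ) * Complex.I) • twistGen twoS L)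

/-- The generator `Σ_{j=1}^{L} (j - 1/2)(S^z_j - S)` of the link-centered twist. -/
def twistGenL (twoS L : ℕ) [NeZero L] : Op twoS L :=
  ∑ j ∈ Finset.Icc 1 L,
    ((j : ℂ) - 1 / 2) • site twoS L ((j : ℕ) : Fin L) (SzMat twoS - ((spin twoS : ℝ) : ℂ) • 1)

/-- The link-centered twist operator `U^twl_{ε·2π}`, `ε = ±1`. -/
def UtwL (twoS L : ℕ) [NeZero L] (ε : ℝ) : Op twoS L :=
  NormedSpace.exp ((-(ε : ℂ) * ((2 * Real.pi / L : ℝ) : ℂ) * Complex.I) • twistGenL twoS L)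

/-- The spin-reversal operator `U^y_π = exp(-iπ S^y_T)`. -/
def Uy (twoS L : ℕ) : Op twoS L :=
  NormedSpace.exp ((-Complex.I * ((Real.pi : ℝ) : ℂ)) • SyT twoS L)

/-- The sector `V(M, q)` of simultaneous eigenvectors of `S^z_T` (eigenvalue `M`) and of
the translation `U_trl` (eigenvalue `e^{iq}`). -/
def Vsp (twoS L : ℕ) [NeZero L] (M q : ℝ) : Submodule ℂ (Conf twoS L → ℂ) :=
  Module.End.eigenspace (Matrix.mulVecLin (SzT twoS L)) ((M : ℝ) : ℂ) ⊓
    Module.End.eigenspace (Matrix.mulVecLin (Utrl twoS L)) (Complex.exp (Complex.I * q))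

/-- `E(M; q)`: the smallest eigenvalue of `H` restricted to the sector `V(M,q)`. -/
def En (twoS L : ℕ) [NeZero L] (J Δ : ℕ → ℝ) (h : ℝ) (M q : ℝ) : ℝ :=
  sInf {E : ℝ | ∃ ψ ∈ Vsp twoS L M q, ψ ≠ 0 ∧
    (Ham twoS L J Δ h).mulVec ψ = ((E : ℝ) : ℂ) • ψ}

/-- The expectation value `⟨ψ, A ψ⟩`. -/
def expVal (twoS L : ℕ) (A : Op twoS L) (ψ : Conf twoS L → ℂ) : ℂ :=
  dotProduct (star ψ) (A.mulVec ψ)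

/-- `q` belongs to the lattice `(2π/L)ℤ` of allowed wavenumbers. -/
def allowedQ (L : ℕ) (q : ℝ) : Prop := ∃ k : ℤ, q = 2 * Real.pi * k / L

/-!
In the product basis both `S^z_T` and the twist are diagonal, the twist acting on the
configuration `x` by the phase `exp(-2πiε W(x)/L)` with `W(x) = Σ_{j=1}^{L} j (m_{x_j} - S)`;
hence they commute and the magnetization is preserved. Translating `x` by one site raises every
weight `j` by one except at the site that wraps around from `L` to `1`, so `W` changes by
`Σ_j m_{x_j} - L m_{x_0}`. On the sector of magnetization `M` the translated twist therefore
picks up `exp(-2πiεM/L) · exp(2πiε m_{x_0})`, and `ε m_{x_0} ≡ S (mod ℤ)` because `2S` is an integer.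
-/

theorem _root_.Finset.sum_Icc_one_eq_sum_range {M : Type*} [AddCommMonoid M] (f : ℕ → M)
    (n : ℕ) : ∑ j ∈ Finset.Icc 1 n, f j = ∑ k ∈ Finset.range n, f (k + 1) := by
  rw [← Finset.Ico_add_one_right_eq_Icc, Finset.sum_Ico_eq_sum_range, add_tsub_cancel_right]
  simp only [add_comm]

theorem _root_.Fin.sum_Icc_natCast_mul_sub_one {R : Type*} [CommRing R] {n : ℕ} [NeZero n]
    (g : Fin n → R) :
    ∑ j ∈ Finset.Icc 1 n, (j : R) * g ((j : Fin n) - 1) =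
      ∑ j ∈ Finset.Icc 1 n, (j : R) * g j + ∑ i, g i - n * g 0 := by
  have hsum : ∑ i, g i = ∑ k ∈ Finset.range n, g k := by
    rw [← Fin.sum_univ_eq_sum_range]; simp only [Fin.cast_val_eq_self]
  have hweighted : ∑ j ∈ Finset.Icc 1 n, (j : R) * g j =
      ∑ k ∈ Finset.range n, (k : R) * g k + n * g 0 := by
    have h := Finset.sum_range_succ' (fun k => (k : R) * g k) n
    rw [Finset.sum_range_succ, Fin.natCast_self] at h
    simpa [Finset.sum_Icc_one_eq_sum_range] using h.symm
  rw [Finset.sum_Icc_one_eq_sum_range, hweighted, hsum, add_sub_right_comm, add_sub_cancel_right,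
    ← Finset.sum_add_distrib]
  simp only [Nat.cast_add, Nat.cast_one, add_sub_cancel_right, add_one_mul]

theorem _root_.Matrix.diagonal_finset_sum {ι n α : Type*} [DecidableEq n] [AddCommMonoid α]
    (s : Finset ι) (d : ι → n → α) :
    Matrix.diagonal (∑ i ∈ s, d i) = ∑ i ∈ s, Matrix.diagonal (d i) :=
  map_sum (Matrix.diagonalAddMonoidHom n α) d s

section

variable {twoS L : ℕ}

def magnetization (x : Conf twoS L) : ℝ := ∑ i, mval twoS (x i)

def twistWeight [NeZero L] (x : Conf twoS L) : ℝ :=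
  ∑ j ∈ Finset.Icc 1 L, (j : ℝ) * (mval twoS (x j) - spin twoS)

theorem site_diagonal (j : Fin L) (d : Fin (N twoS) → ℂ) :
    site twoS L j (Matrix.diagonal d) = Matrix.diagonal fun x : Conf twoS L => d (x j) := by
  ext x y
  by_cases hxy : x = y
  · subst hxy; simp [site]
  · rw [Matrix.diagonal_apply_ne _ hxy, site, Matrix.of_apply]
    refine ite_eq_right_iff.mpr fun h => Matrix.diagonal_apply_ne _ fun hj => hxy ?_
    funext i
    by_cases hi : i = j
    · exact hi ▸ hj
    · exact h i hi

theorem SzT_eq_diagonal :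
    SzT twoS L = Matrix.diagonal fun x : Conf twoS L => (magnetization x : ℂ) := by
  simp only [SzT, SzMat, site_diagonal, ← Matrix.diagonal_finset_sum]
  congr 1; funext x; simp [magnetization, Finset.sum_apply]

theorem twistGen_eq_diagonal [NeZero L] :
    twistGen twoS L = Matrix.diagonal fun x : Conf twoS L => (twistWeight x : ℂ) := by
  have hsite : SzMat twoS - ((spin twoS : ℝ) : ℂ) • 1 =
      Matrix.diagonal fun k => ((mval twoS k - spin twoS : ℝ) : ℂ) := by
    ext a b
    by_cases hab : a = b
    · subst hab; simp [SzMat]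
    · simp [SzMat, hab]
  simp only [twistGen, hsite, site_diagonal, ← Matrix.diagonal_smul, ← Matrix.diagonal_finset_sum]
  congr 1; funext x; simp [twistWeight, Finset.sum_apply]

theorem Utw_eq_diagonal [NeZero L] (ε : ℝ) :
    Utw twoS L ε = Matrix.diagonal fun x : Conf twoS L =>
      Complex.exp (-(ε : ℂ) * ((2 * Real.pi / L : ℝ) : ℂ) * Complex.I * twistWeight x) := by
  rw [Utw, twistGen_eq_diagonal, ← Matrix.diagonal_smul, Matrix.exp_diagonal]
  congr 1; funext x
  rw [Pi.coe_exp, ← Complex.exp_eq_exp_ℂ]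
  rfl

theorem commute_SzT_Utw [NeZero L] (ε : ℝ) : Commute (SzT twoS L) (Utw twoS L ε) := by
  rw [SzT_eq_diagonal, Utw_eq_diagonal]
  exact Matrix.commute_diagonal _ _

theorem Utrl_mulVec_apply [NeZero L] (φ : Conf twoS L → ℂ) (x : Conf twoS L) :
    (Utrl twoS L).mulVec φ x = φ fun i => x (i - 1) := by
  have hshift : ∀ y : Conf twoS L, (x = fun i => y (i + 1)) ↔ y = fun i => x (i - 1) :=
    fun y => ⟨fun h => funext fun i => by simp [h], fun h => funext fun i => by simp [h]⟩
  simp [Utrl, Matrix.mulVec, dotProduct, hshift]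

theorem magnetization_comp_sub_one [NeZero L] (x : Conf twoS L) :
    magnetization (fun i => x (i - 1)) = magnetization x :=
  (Equiv.subRight (1 : Fin L)).sum_comp fun i => mval twoS (x i)

theorem twistWeight_comp_sub_one [NeZero L] (x : Conf twoS L) :
    twistWeight (fun i => x (i - 1)) = twistWeight x + magnetization x - L * mval twoS (x 0) := by
  rw [twistWeight, Fin.sum_Icc_natCast_mul_sub_one (fun i => mval twoS (x i) - spin twoS),
    twistWeight, magnetization, Finset.sum_sub_distrib]
  simp only [Finset.sum_const, Finset.card_univ, Fintype.card_fin, nsmul_eq_mul]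
  ring

theorem exp_mul_mval_mul_two_pi_I {ε : ℝ} (hε : ε = 1 ∨ ε = -1) (k : Fin (N twoS)) :
    Complex.exp (((ε * mval twoS k : ℝ) : ℂ) * (2 * Real.pi * Complex.I)) =
      Complex.exp (((spin twoS : ℝ) : ℂ) * (2 * Real.pi * Complex.I)) := by
  rw [Complex.exp_eq_exp_iff_exists_int]
  rcases hε with rfl | rfl
  · exact ⟨-k, by push_cast [mval]; ring⟩
  · exact ⟨k - twoS, by push_cast [mval, spin]; ring⟩

theorem Utrl_mulVec_Utw_mulVec [NeZero L] {ε M : ℝ} (hε : ε = 1 ∨ ε = -1)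
    {φ : Conf twoS L → ℂ} (hφ : (SzT twoS L).mulVec φ = (M : ℂ) • φ) :
    (Utrl twoS L).mulVec ((Utw twoS L ε).mulVec φ) =
      Complex.exp
          (Complex.I * ((-(ε * (2 * Real.pi) * M / L) + 2 * Real.pi * spin twoS : ℝ) : ℂ)) •
        (Utw twoS L ε).mulVec ((Utrl twoS L).mulVec φ) := by
  funext x
  rw [Pi.smul_apply, Utrl_mulVec_apply, Utw_eq_diagonal, Matrix.mulVec_diagonal,
    Matrix.mulVec_diagonal, Utrl_mulVec_apply, smul_eq_mul, ← mul_assoc]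
  by_cases hy : φ (fun i => x (i - 1)) = 0
  · simp [hy]
  have hmag : magnetization x = M := by
    have h := congrFun hφ (fun i => x (i - 1))
    rw [SzT_eq_diagonal, Matrix.mulVec_diagonal, Pi.smul_apply, smul_eq_mul] at h
    exact_mod_cast magnetization_comp_sub_one x ▸ mul_right_cancel₀ hy h
  have hL : (L : ℂ) ≠ 0 := Nat.cast_ne_zero.mpr (NeZero.ne L)
  congr 1
  set c : ℂ := -(ε : ℂ) * ((2 * Real.pi / L : ℝ) : ℂ) * Complex.I with hc
  have hphase : Complex.exp
      (Complex.I * ((-(ε * (2 * Real.pi) * M / L) + 2 * Real.pi * spin twoS : ℝ) : ℂ)) =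
      Complex.exp (c * M + ((ε * mval twoS (x 0) : ℝ) : ℂ) * (2 * Real.pi * Complex.I)) := by
    rw [Complex.exp_add, exp_mul_mval_mul_two_pi_I hε, ← Complex.exp_add, hc]
    congr 1
    push_cast
    ring
  rw [twistWeight_comp_sub_one, hmag, hphase, ← Complex.exp_add, hc]
  congr 1
  push_cast
  field_simp
  ring

end

theorem twist_shifts_wavenumber_general (twoS L : ℕ) [NeZero L]
    (ψ : Conf twoS L → ℂ) (M q : ℝ)
    (hψq : (Utrl twoS L).mulVec ψ = Complex.exp (Complex.I * (q : ℂ)) • ψ)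
    (hψM : (SzT twoS L).mulVec ψ = ((M : ℝ) : ℂ) • ψ) :
    ∀ ε : ℝ, (ε = 1 ∨ ε = -1) →
      (Utrl twoS L).mulVec ((Utw twoS L ε).mulVec ψ) =
        Complex.exp (Complex.I *
            ((q - ε * (2 * Real.pi) * M / L + 2 * Real.pi * spin twoS : ℝ) : ℂ)) •
          (Utw twoS L ε).mulVec ψ ∧
      (SzT twoS L).mulVec ((Utw twoS L ε).mulVec ψ) =
        ((M : ℝ) : ℂ) • (Utw twoS L ε).mulVec ψ := by
  intro ε hε
  constructor
  · rw [Utrl_mulVec_Utw_mulVec hε hψM, hψq, Matrix.mulVec_smul, smul_smul, ← Complex.exp_add]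
    congr 2
    push_cast
    ring
  · rw [Matrix.mulVec_mulVec, (commute_SzT_Utw ε).eq, ← Matrix.mulVec_mulVec, hψM,
      Matrix.mulVec_smul]

/-- twisting shifts the wavenumber by `∓2πM/L + 2πS` and preserves the
magnetization. -/
theorem twist_shifts_wavenumber (twoS L : ℕ) [NeZero L]
    (hS : 0 < twoS) (hL4 : 4 ≤ L) (hLeven : Even L)
    (ψ : Conf twoS L → ℂ) (M q : ℝ)
    (hψq : (Utrl twoS L).mulVec ψ = Complex.exp (Complex.I * (q : ℂ)) • ψ)
    (hψM : (SzT twoS L).mulVec ψ = ((M : ℝ) : ℂ) • ψ) :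
    ∀ ε : ℝ, (ε = 1 ∨ ε = -1) →
      (Utrl twoS L).mulVec ((Utw twoS L ε).mulVec ψ) =
        Complex.exp (Complex.I *
            ((q - ε * (2 * Real.pi) * M / L + 2 * Real.pi * spin twoS : ℝ) : ℂ)) •
          (Utw twoS L ε).mulVec ψ ∧
      (SzT twoS L).mulVec ((Utw twoS L ε).mulVec ψ) =
        ((M : ℝ) : ℂ) • (Utw twoS L ε).mulVec ψ :=
  twist_shifts_wavenumber_general twoS L ψ M q hψq hψM

end LSM
end
end

section
/- (Lemma 5) The spin-reversal operator and the link-centered twist operators satisfy U^y_π U^twl_{±2π} = U^twl_{∓2π} U^y_π (with no extra sign, in contrast to the site-centered twist). -/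
open scoped BigOperators Matrix
open Fin.NatCast
noncomputable section

namespace LSM

/-!
`U^y_π = exp(-iπ S^y_T)` anticommutes with every `S^z_j`: since `[S^y, S^z] = i S^x` and
`[S^y, S^x] = -i S^z`, the operators `S^z_j ± i S^x_j` are eigenvectors of `ad (S^y_T)` with
eigenvalues `±1`, so conjugation by `exp(-iπ S^y_T)` multiplies both by `e^{∓iπ} = -1`.
Consequently `U^y_π` conjugates the generator `Σ_j (j - 1/2)(S^z_j - S)` of the link twist into
its negative minus `2S Σ_j (j - 1/2) = S L²`, which gives
`U^y_π U^twl_{ε·2π} = e^{2πi ε S L} U^twl_{-ε·2π} U^y_π`. For even `L` the number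
`S L = (2S)(L/2)` is an integer, so the phase is `1`; the half-integer offsets `j - 1/2` are what
remove the sign `e^{iπ 2S}` that the site-centered twist picks up.
-/

open Matrix NormedSpace

section MatrixExp

variable {m : Type*} [Fintype m] [DecidableEq m]

theorem _root_.Matrix.semiconjBy_exp {A B C : Matrix m m ℂ} (h : SemiconjBy C A B) :
    SemiconjBy C (exp A) (exp B) :=
  open scoped Norms.Operator in h.exp_right

theorem _root_.Matrix.exp_smul_one (c : ℂ) :
    exp (c • (1 : Matrix m m ℂ)) = Complex.exp c • 1 := by
  rw [smul_one_eq_diagonal, exp_diagonal, smul_one_eq_diagonal, Pi.exp_def]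
  simp [← Complex.exp_eq_exp_ℂ]

theorem _root_.Matrix.exp_mul_of_commutator_eq_smul {A V : Matrix m m ℂ} {c : ℂ}
    (h : A * V - V * A = c • V) : exp A * V = Complex.exp c • (V * exp A) := by
  have hV : SemiconjBy V (A + c • 1) A := by
    rw [SemiconjBy, mul_add, mul_smul_one, ← h]
    abel
  rw [← (semiconjBy_exp hV).eq, exp_add_of_commute _ _ ((Commute.one_right A).smul_right c),
    exp_smul_one, mul_smul_one, mul_smul_comm]

end MatrixExp

lemma sum_Icc_natCast_sub_half (n : ℕ) :
    ∑ j ∈ Finset.Icc 1 n, ((j : ℂ) - 1 / 2) = (n : ℂ) ^ 2 / 2 := by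
  induction n with
  | zero => simp
  | succ n ih =>
    rw [Finset.sum_Icc_succ_top (by omega), ih]
    push_cast
    ring

section SpinMatrices

variable {twoS : ℕ}

lemma val_le_twoS (a : Fin (N twoS)) : (a : ℕ) ≤ twoS := Nat.lt_succ_iff.mp a.isLt

lemma mval_eq_of_val_eq_succ {a b : Fin (N twoS)} (h : (b : ℕ) = a + 1) :
    mval twoS b = mval twoS a - 1 := by
  simp only [mval, h]
  push_cast
  ring

lemma spin_sq_sub_mval_mul_sub_one (a : Fin (N twoS)) :
    spin twoS * (spin twoS + 1) - mval twoS a * (mval twoS a - 1) = (twoS - a) * (a + 1) := by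
  simp only [mval, spin]
  ring

lemma spin_sq_sub_mval_mul_add_one (a : Fin (N twoS)) :
    spin twoS * (spin twoS + 1) - mval twoS a * (mval twoS a + 1) = a * (twoS - a + 1) := by
  simp only [mval, spin]
  ring

lemma SpMat_mul_SmMat : SpMat twoS * SmMat twoS = diagonal fun a =>
    ((spin twoS * (spin twoS + 1) - mval twoS a * (mval twoS a - 1) : ℝ) : ℂ) := by
  ext a b
  rw [mul_apply, diagonal_apply]
  simp only [SpMat, SmMat, of_apply, ite_zero_mul_ite_zero]
  split_ifs with hab
  · subst hab
    have ha := val_le_twoS a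
    by_cases hlt : (a : ℕ) < twoS
    · rw [Finset.sum_eq_single ⟨a + 1, by simp only [N]; omega⟩
        (fun c _ hc => if_neg fun h => hc (Fin.ext (by simp; omega))) (by simp),
        if_pos ⟨rfl, rfl⟩, ← Complex.ofReal_mul, mval_eq_of_val_eq_succ rfl,
        show mval twoS a - 1 + 1 = mval twoS a by ring, mul_comm (mval twoS a - 1),
        Real.mul_self_sqrt]
      rw [spin_sq_sub_mval_mul_sub_one]
      have : ((a : ℕ) : ℝ) ≤ twoS := by exact_mod_cast ha
      nlinarith
    -- `m = -S`: `S⁻` annihilates this state and the diagonal entry vanishes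
    · rw [Finset.sum_eq_zero fun c _ => if_neg (by have := val_le_twoS c; omega),
        spin_sq_sub_mval_mul_sub_one, show (a : ℕ) = twoS by omega]
      simp
  · exact Finset.sum_eq_zero fun c _ => if_neg fun h => hab (Fin.ext (by omega))

lemma SmMat_mul_SpMat : SmMat twoS * SpMat twoS = diagonal fun a =>
    ((spin twoS * (spin twoS + 1) - mval twoS a * (mval twoS a + 1) : ℝ) : ℂ) := by
  ext a b
  rw [mul_apply, diagonal_apply]
  simp only [SpMat, SmMat, of_apply, ite_zero_mul_ite_zero]
  split_ifs with hab
  · subst hab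
    have ha := val_le_twoS a
    by_cases hpos : 0 < (a : ℕ)
    · have hc : ((⟨a - 1, by omega⟩ : Fin (N twoS)) : ℕ) + 1 = a := by simp; omega
      rw [Finset.sum_eq_single ⟨a - 1, by omega⟩
        (fun c _ hc => if_neg fun h => hc (Fin.ext (by simp; omega))) (by simp),
        if_pos ⟨hc.symm, hc⟩, ← Complex.ofReal_mul, mval_eq_of_val_eq_succ hc.symm,
        show mval twoS ⟨a - 1, by omega⟩ = mval twoS a + 1 by
          rw [mval_eq_of_val_eq_succ hc.symm]; ring,
        show mval twoS a + 1 - 1 = mval twoS a by ring, mul_comm (mval twoS a + 1),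
        Real.mul_self_sqrt]
      rw [spin_sq_sub_mval_mul_add_one]
      have : ((a : ℕ) : ℝ) ≤ twoS := by exact_mod_cast ha
      positivity
    · rw [Finset.sum_eq_zero fun c _ => if_neg (by omega),
        spin_sq_sub_mval_mul_add_one, show (a : ℕ) = 0 by omega]
      simp
  · exact Finset.sum_eq_zero fun c _ => if_neg fun h => hab (Fin.ext (by omega))

lemma commutator_SpMat_SmMat :
    SpMat twoS * SmMat twoS - SmMat twoS * SpMat twoS = (2 : ℂ) • SzMat twoS := by
  rw [SpMat_mul_SmMat, SmMat_mul_SpMat, diagonal_sub, SzMat, ← diagonal_smul]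
  congr 1
  funext a
  simp only [Pi.smul_apply, smul_eq_mul]
  push_cast
  ring

lemma commutator_SzMat_SpMat :
    SzMat twoS * SpMat twoS - SpMat twoS * SzMat twoS = SpMat twoS := by
  ext a b
  rw [Matrix.sub_apply, SzMat, diagonal_mul, mul_diagonal]
  simp only [SpMat, of_apply]
  split_ifs with h
  · rw [mval_eq_of_val_eq_succ h.symm]
    push_cast
    ring
  · ring

lemma commutator_SzMat_SmMat :
    SzMat twoS * SmMat twoS - SmMat twoS * SzMat twoS = -SmMat twoS := by
  ext a b
  rw [Matrix.sub_apply, Matrix.neg_apply, SzMat, diagonal_mul, mul_diagonal]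
  simp only [SmMat, of_apply]
  split_ifs with h
  · rw [mval_eq_of_val_eq_succ h]
    push_cast
    ring
  · ring

lemma SyMat_eq : SyMat twoS = (-(Complex.I / 2)) • (SpMat twoS - SmMat twoS) := by
  rw [SyMat, mul_inv, Complex.inv_I]
  congr 1
  ring

lemma commutator_SyMat_SzMat :
    SyMat twoS * SzMat twoS - SzMat twoS * SyMat twoS = Complex.I • SxMat twoS := by
  have hp := commutator_SzMat_SpMat (twoS := twoS)
  have hm := commutator_SzMat_SmMat (twoS := twoS)
  rw [sub_eq_iff_eq_add] at hp hm
  simp only [SyMat_eq, SxMat, smul_mul_assoc, mul_smul_comm, sub_mul, mul_sub, hp, hm]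
  module

lemma commutator_SyMat_SxMat :
    SyMat twoS * SxMat twoS - SxMat twoS * SyMat twoS = (-Complex.I) • SzMat twoS := by
  have h := commutator_SpMat_SmMat (twoS := twoS)
  rw [sub_eq_iff_eq_add] at h
  simp only [SyMat_eq, SxMat, smul_mul_assoc, mul_smul_comm, sub_mul, mul_sub, mul_add, add_mul,
    h]
  module

lemma commutator_SyMat_SzMat_add_smul_SxMat {s : ℂ} (hs : s * s = -1) :
    SyMat twoS * (SzMat twoS + s • SxMat twoS) - (SzMat twoS + s • SxMat twoS) * SyMat twoS =
      (-(Complex.I * s)) • (SzMat twoS + s • SxMat twoS) := by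
  have hz := commutator_SyMat_SzMat (twoS := twoS)
  have hx := commutator_SyMat_SxMat (twoS := twoS)
  rw [sub_eq_iff_eq_add] at hz hx
  simp only [mul_add, add_mul, mul_smul_comm, smul_mul_assoc, hz, hx, smul_add, smul_smul]
  linear_combination (norm := module) hs • (Complex.I • SxMat twoS)

end SpinMatrices

section Site

variable {twoS L : ℕ}

lemma site_apply_of_forall_ne {j : Fin L} {x y : Conf twoS L} (h : ∀ i, i ≠ j → x i = y i)
    (A : Matrix (Fin (N twoS)) (Fin (N twoS)) ℂ) : site twoS L j A x y = A (x j) (y j) :=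
  if_pos h

lemma site_apply_of_not_forall_ne {j : Fin L} {x y : Conf twoS L}
    (h : ¬∀ i, i ≠ j → x i = y i) (A : Matrix (Fin (N twoS)) (Fin (N twoS)) ℂ) :
    site twoS L j A x y = 0 :=
  if_neg h

lemma site_mul_same (j : Fin L) (A B : Matrix (Fin (N twoS)) (Fin (N twoS)) ℂ) :
    site twoS L j A * site twoS L j B = site twoS L j (A * B) := by
  ext x y
  have hx : ∀ k, ∀ i, i ≠ j → x i = Function.update x j k i :=
    fun k i hi => (Function.update_of_ne hi _ _).symm
  rw [mul_apply, ← Fintype.sum_of_injective (Function.update x j) (Function.update_injective x j)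
    (fun k => A (x j) k * site twoS L j B (Function.update x j k) y) _ ?off ?on]
  case off =>
    intro z hz
    refine mul_eq_zero_of_left (site_apply_of_not_forall_ne (fun h => hz ?_) A) _
    exact ⟨z j, Function.update_eq_iff.mpr ⟨rfl, h⟩⟩
  case on =>
    intro k
    rw [site_apply_of_forall_ne (hx k), Function.update_self]
  by_cases hxy : ∀ i, i ≠ j → x i = y i
  · have hk : ∀ k, ∀ i, i ≠ j → Function.update x j k i = y i :=
      fun k i hi => (Function.update_of_ne hi _ _).trans (hxy i hi)
    simp only [site_apply_of_forall_ne hxy, site_apply_of_forall_ne (hk _), Function.update_self,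
      mul_apply]
  · have hk : ∀ k, ¬∀ i, i ≠ j → Function.update x j k i = y i :=
      fun k h => hxy fun i hi => (Function.update_of_ne hi _ _).symm.trans (h i hi)
    simp only [site_apply_of_not_forall_ne hxy, site_apply_of_not_forall_ne (hk _), mul_zero,
      Finset.sum_const_zero]

lemma site_mul_site_apply_of_ne {j k : Fin L} (hjk : j ≠ k)
    (A B : Matrix (Fin (N twoS)) (Fin (N twoS)) ℂ) (x y : Conf twoS L) :
    (site twoS L j A * site twoS L k B) x y =
      if ∀ i, i ≠ j → i ≠ k → x i = y i then A (x j) (y j) * B (x k) (y k) else 0 := by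
  set z₀ := Function.update x j (y j)
  have hz₀j : z₀ j = y j := Function.update_self ..
  have hxz₀ : ∀ i, i ≠ j → x i = z₀ i := fun i hi => (Function.update_of_ne hi _ _).symm
  have hz₀y : (∀ i, i ≠ k → z₀ i = y i) ↔ ∀ i, i ≠ j → i ≠ k → x i = y i := by
    refine ⟨fun h i hij hik => (hxz₀ i hij).trans (h i hik), fun h i hik => ?_⟩
    by_cases hij : i = j
    · rw [hij, hz₀j]
    · exact (hxz₀ i hij).symm.trans (h i hij hik)
  rw [mul_apply, Finset.sum_eq_single z₀ ?other (by simp), site_apply_of_forall_ne hxz₀, hz₀j]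
  case other =>
    intro z _ hz
    by_cases hxz : ∀ i, i ≠ j → x i = z i
    · refine mul_eq_zero_of_right _ (site_apply_of_not_forall_ne (fun hzy => hz ?_) B)
      exact (Function.update_eq_iff.mpr ⟨(hzy j hjk).symm, hxz⟩).symm
    · exact mul_eq_zero_of_left (site_apply_of_not_forall_ne hxz A) _
  by_cases hxy : ∀ i, i ≠ j → i ≠ k → x i = y i
  · rw [site_apply_of_forall_ne (hz₀y.mpr hxy), if_pos hxy, ← hxz₀ k hjk.symm]
  · rw [site_apply_of_not_forall_ne (mt hz₀y.mp hxy), if_neg hxy, mul_zero]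

lemma site_commute {j k : Fin L} (hjk : j ≠ k) (A B : Matrix (Fin (N twoS)) (Fin (N twoS)) ℂ) :
    Commute (site twoS L j A) (site twoS L k B) := by
  ext x y
  rw [site_mul_site_apply_of_ne hjk, site_mul_site_apply_of_ne hjk.symm, mul_comm]
  exact if_congr ⟨fun h i hik hij => h i hij hik, fun h i hij hik => h i hik hij⟩ rfl rfl

lemma site_one (j : Fin L) : site twoS L j (1 : Matrix (Fin (N twoS)) (Fin (N twoS)) ℂ) = 1 := by
  ext x y
  by_cases h : ∀ i, i ≠ j → x i = y i
  · rw [site_apply_of_forall_ne h, one_apply, one_apply]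
    exact if_congr ⟨fun hj => funext fun i => if hi : i = j then hi ▸ hj else h i hi,
      fun hxy => congrFun hxy j⟩ rfl rfl
  · rw [site_apply_of_not_forall_ne h, one_apply, if_neg]
    rintro rfl
    exact h fun _ _ => rfl

lemma site_add (j : Fin L) (A B : Matrix (Fin (N twoS)) (Fin (N twoS)) ℂ) :
    site twoS L j (A + B) = site twoS L j A + site twoS L j B := by
  ext x y
  simp only [site, of_apply, Matrix.add_apply]
  split_ifs <;> simp

lemma site_sub (j : Fin L) (A B : Matrix (Fin (N twoS)) (Fin (N twoS)) ℂ) :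
    site twoS L j (A - B) = site twoS L j A - site twoS L j B := by
  ext x y
  simp only [site, of_apply, Matrix.sub_apply]
  split_ifs <;> simp

lemma site_smul (j : Fin L) (c : ℂ) (A : Matrix (Fin (N twoS)) (Fin (N twoS)) ℂ) :
    site twoS L j (c • A) = c • site twoS L j A := by
  ext x y
  simp only [site, of_apply, Matrix.smul_apply]
  split_ifs <;> simp

end Site

section Chain

variable {twoS L : ℕ}

lemma commutator_SyT_site (j : Fin L) (X : Matrix (Fin (N twoS)) (Fin (N twoS)) ℂ) :
    SyT twoS L * site twoS L j X - site twoS L j X * SyT twoS L =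
      site twoS L j (SyMat twoS * X - X * SyMat twoS) := by
  rw [SyT, Finset.sum_mul, Finset.mul_sum, ← Finset.sum_sub_distrib, Finset.sum_eq_single j
    (fun k _ hkj => by rw [(site_commute hkj _ _).eq, sub_self]) (by simp), site_mul_same,
    site_mul_same, site_sub]

lemma Uy_mul_site_of_commutator_eq_smul {j : Fin L}
    {X : Matrix (Fin (N twoS)) (Fin (N twoS)) ℂ} {c : ℂ}
    (h : SyMat twoS * X - X * SyMat twoS = c • X) :
    Uy twoS L * site twoS L j X =
      Complex.exp (-Complex.I * Real.pi * c) • (site twoS L j X * Uy twoS L) :=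
  exp_mul_of_commutator_eq_smul (by
    rw [smul_mul_assoc, mul_smul_comm, ← smul_sub, commutator_SyT_site, h, site_smul, smul_smul])

lemma Uy_mul_site_SzMat (j : Fin L) :
    Uy twoS L * site twoS L j (SzMat twoS) = -(site twoS L j (SzMat twoS) * Uy twoS L) := by
  have hW : ∀ s : ℂ, s * s = -1 → Complex.exp (-(Real.pi * s)) = -1 →
      Uy twoS L * site twoS L j (SzMat twoS + s • SxMat twoS) =
        -(site twoS L j (SzMat twoS + s • SxMat twoS) * Uy twoS L) := by
    intro s hs hexp
    rw [Uy_mul_site_of_commutator_eq_smul (commutator_SyMat_SzMat_add_smul_SxMat hs),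
      show -Complex.I * Real.pi * -(Complex.I * s) = -(Real.pi * s) by
        linear_combination (Real.pi * s : ℂ) * Complex.I_mul_I,
      hexp, neg_one_smul]
  have hSz : SzMat twoS = (2 : ℂ)⁻¹ • ((SzMat twoS + Complex.I • SxMat twoS) +
      (SzMat twoS + (-Complex.I) • SxMat twoS)) := by module
  have hI := hW Complex.I Complex.I_mul_I (by rw [Complex.exp_neg, Complex.exp_pi_mul_I]; norm_num)
  have hnegI := hW (-Complex.I) (by rw [neg_mul_neg, Complex.I_mul_I])
    (by rw [mul_neg, neg_neg, Complex.exp_pi_mul_I])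
  rw [hSz, site_smul, site_add, mul_smul_comm, mul_add, hI, hnegI, smul_mul_assoc, add_mul,
    ← neg_add, smul_neg]

lemma Uy_mul_site_SzMat_sub_spin (j : Fin L) :
    Uy twoS L * site twoS L j (SzMat twoS - (spin twoS : ℂ) • 1) =
      (-site twoS L j (SzMat twoS - (spin twoS : ℂ) • 1) - (2 * spin twoS : ℂ) • 1) *
        Uy twoS L := by
  rw [site_sub, site_smul, site_one, mul_sub, Uy_mul_site_SzMat, mul_smul_comm, mul_one]
  simp only [sub_mul, neg_mul, smul_mul_assoc, one_mul]
  module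

variable [NeZero L]

lemma Uy_mul_twistGenL : Uy twoS L * twistGenL twoS L =
    (-twistGenL twoS L - (spin twoS * L ^ 2 : ℂ) • 1) * Uy twoS L := by
  set Z : ℕ → Op twoS L := fun j => site twoS L (j : ℕ) (SzMat twoS - (spin twoS : ℂ) • 1)
  calc Uy twoS L * twistGenL twoS L
      = ∑ j ∈ Finset.Icc 1 L, (-(((j : ℂ) - 1 / 2) • Z j) -
          (2 * spin twoS * ((j : ℂ) - 1 / 2)) • 1) * Uy twoS L := by
        rw [twistGenL, Finset.mul_sum]
        refine Finset.sum_congr rfl fun j _ => ?_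
        rw [mul_smul_comm, Uy_mul_site_SzMat_sub_spin]
        simp only [Z, sub_mul, neg_mul, smul_mul_assoc, one_mul]
        module
    _ = (-twistGenL twoS L -
          (2 * spin twoS * ∑ j ∈ Finset.Icc 1 L, ((j : ℂ) - 1 / 2)) • 1) * Uy twoS L := by
        rw [← Finset.sum_mul, Finset.sum_sub_distrib, Finset.sum_neg_distrib, ← Finset.sum_smul,
          Finset.mul_sum, twistGenL]
    _ = _ := by
        rw [sum_Icc_natCast_sub_half]
        ring_nf

lemma Uy_mul_exp_smul_twistGenL (c : ℂ) :
    Uy twoS L * exp (c • twistGenL twoS L) =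
      Complex.exp (-(c * (spin twoS * L ^ 2))) •
        (exp ((-c) • twistGenL twoS L) * Uy twoS L) := by
  have h : SemiconjBy (Uy twoS L) (c • twistGenL twoS L)
      ((-c) • twistGenL twoS L + (-(c * (spin twoS * L ^ 2))) • 1) := by
    rw [SemiconjBy, mul_smul_comm, Uy_mul_twistGenL]
    simp only [sub_mul, add_mul, neg_mul, smul_mul_assoc, one_mul]
    module
  rw [(semiconjBy_exp h).eq, exp_add_of_commute _ _ ((Commute.one_right _).smul_right _),
    exp_smul_one, mul_smul_one, smul_mul_assoc]

lemma Uy_mul_UtwL (ε : ℝ) :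
    Uy twoS L * UtwL twoS L ε =
      Complex.exp (ε * (spin twoS * L) * (2 * Real.pi * Complex.I)) •
        (UtwL twoS L (-ε) * Uy twoS L) := by
  have hL : (L : ℂ) ≠ 0 := Nat.cast_ne_zero.mpr (NeZero.ne L)
  rw [UtwL, UtwL, Uy_mul_exp_smul_twistGenL]
  push_cast
  congr 3
  · field_simp
  · congr 1
    ring

lemma Uy_mul_UtwL_intCast_of_even (hL : Even L) (n : ℤ) :
    Uy twoS L * UtwL twoS L n = UtwL twoS L (-n) * Uy twoS L := by
  obtain ⟨l, hl⟩ := hL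
  have hphase : (n : ℝ) * (spin twoS * L) = ((n * twoS * l : ℤ) : ℂ) := by
    simp only [spin, hl]
    push_cast
    ring
  rw [Uy_mul_UtwL, hphase, Complex.exp_int_mul_two_pi_mul_I, one_smul]

end Chain

theorem spin_reversal_link_twist_commutation_general (twoS L : ℕ) [NeZero L]
    (hLeven : Even L) :
    Uy twoS L * UtwL twoS L 1 = UtwL twoS L (-1) * Uy twoS L ∧
    Uy twoS L * UtwL twoS L (-1) = UtwL twoS L 1 * Uy twoS L :=
  ⟨by simpa using Uy_mul_UtwL_intCast_of_even hLeven 1,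
    by simpa using Uy_mul_UtwL_intCast_of_even hLeven (-1)⟩

/-- Lemma 5: `U^y_π U^twl_{±2π} = U^twl_{∓2π} U^y_π` (no extra sign). -/
theorem spin_reversal_link_twist_commutation (twoS L : ℕ) [NeZero L]
    (hS : 0 < twoS) (hL4 : 4 ≤ L) (hLeven : Even L) :
    Uy twoS L * UtwL twoS L 1 = UtwL twoS L (-1) * Uy twoS L ∧
    Uy twoS L * UtwL twoS L (-1) = UtwL twoS L 1 * Uy twoS L :=
  spin_reversal_link_twist_commutation_general twoS L hLeven

end LSM
end
end
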